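/- Let n ≥ 3 be odd. Then the alternating bilinear form J on ℤ^n is invariant under each of the generators S_2, …, S_n of 𝒢_n (i.e., J(S_i v, S_i w) = J(v, w) for all v, w and all 2 ≤ i ≤ n), and the kernel of J (the set of v with J(v, w) = 0 for all w ∈ ℤ^n) is the rank-one subgroup ℤ·(1, 1, …, 1) generated by the vector all of whose k-coordinates equal 1. -/

import Mathlib

/-- The index `i - 1` as an element of `Fin n`. -/
def ipred {n : ℕ} (i : Fin n) : Fin n :=
  ⟨(i : ℕ) - 1, lt_of_le_of_lt (Nat.sub_le _ _) i.isLt⟩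

/-- Forward action of the generator `S_{i+1}` (0-indexed `i`) on `ℤ^n`:
for `i = 0` it is `k_0 ↦ k_0`, `k_j ↦ k_j + k_0` (`j ≠ 0`); for `i ≥ 1` it is
`k_{i-1} ↦ 2 k_{i-1} - k_i`, `k_i ↦ k_{i-1}`, fixing the other coordinates. -/
def SFun (n : ℕ) (i : Fin n) (v : Fin n → ℤ) : Fin n → ℤ := fun j =>
  if (i : ℕ) = 0 then (if (j : ℕ) = 0 then v j else v j + v i)
  else
    if j = ipred i then 2 * v j - v i
    else if j = i then v (ipred i) else v j

/-- Inverse of `SFun`. -/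
def SInvFun (n : ℕ) (i : Fin n) (w : Fin n → ℤ) : Fin n → ℤ := fun j =>
  if (i : ℕ) = 0 then (if (j : ℕ) = 0 then w j else w j - w i)
  else
    if j = ipred i then w i
    else if j = i then 2 * w i - w (ipred i) else w j

theorem ipred_ne {n : ℕ} (i : Fin n) (h : ¬ (i : ℕ) = 0) : ipred i ≠ i := by
  intro hc
  have := congrArg Fin.val hc
  simp [ipred] at this
  omega

theorem left_inv_S (n : ℕ) (i : Fin n) (v : Fin n → ℤ) : SInvFun n i (SFun n i v) = v := by
  by_cases h : (i : ℕ) = 0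
  · funext j
    have hi0 : (i : ℕ) = 0 → ((i : ℕ) = 0) := id
    by_cases hj : (j : ℕ) = 0
    · simp [SFun, SInvFun, h, hj]
    · have hji : j ≠ i := by intro hc; exact hj (by rw [hc]; exact h)
      simp [SFun, SInvFun, h, hj]
  · have hne := ipred_ne i h
    funext j
    by_cases h1 : j = ipred i
    · simp [SFun, SInvFun, h, h1, if_neg hne, if_neg (Ne.symm hne)]
    · by_cases h2 : j = i
      · simp [SFun, SInvFun, h, h1, h2, if_neg hne, if_neg (Ne.symm hne)]
        try ring
      · simp [SFun, SInvFun, h, h1, h2]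

theorem right_inv_S (n : ℕ) (i : Fin n) (v : Fin n → ℤ) : SFun n i (SInvFun n i v) = v := by
  by_cases h : (i : ℕ) = 0
  · funext j
    by_cases hj : (j : ℕ) = 0
    · simp [SFun, SInvFun, h, hj]
    · simp [SFun, SInvFun, h, hj]
  · have hne := ipred_ne i h
    funext j
    by_cases h1 : j = ipred i
    · simp [SFun, SInvFun, h, h1, if_neg hne, if_neg (Ne.symm hne)]
      try ring
    · by_cases h2 : j = i
      · simp [SFun, SInvFun, h, h1, h2, if_neg hne, if_neg (Ne.symm hne)]
      · simp [SFun, SInvFun, h, h1, h2]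

theorem map_add_S (n : ℕ) (i : Fin n) (v w : Fin n → ℤ) :
    SFun n i (v + w) = SFun n i v + SFun n i w := by
  funext j
  simp only [SFun, Pi.add_apply]
  split_ifs <;> ring

/-- The generator `S_{i+1}` as a `ℤ`-linear automorphism of `ℤ^n`. -/
def Sgen (n : ℕ) (i : Fin n) : (Fin n → ℤ) ≃ₗ[ℤ] (Fin n → ℤ) :=
  AddEquiv.toIntLinearEquiv
    { toFun := SFun n i
      invFun := SInvFun n i
      left_inv := left_inv_S n i
      right_inv := right_inv_S n i
      map_add' := map_add_S n i }

/-- The group `𝒢_n`: the subgroup of automorphisms of `ℤ^n` generated by `S_1, …, S_n`. -/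
def Gn (n : ℕ) : Subgroup ((Fin n → ℤ) ≃ₗ[ℤ] (Fin n → ℤ)) :=
  Subgroup.closure (Set.range (Sgen n))

/-- `x_i(v) = Σ_{j ≤ i} (−1)^{i−j} k_j` (0-indexed). -/
def xcoord {R : Type*} [CommRing R] {n : ℕ} (i : Fin n) (v : Fin n → R) : R :=
  ∑ j : Fin n, if j ≤ i then (-1 : R) ^ ((i : ℕ) - (j : ℕ)) * v j else 0

/-- The alternating form `J(v,w) = Σ_{i=1}^{n-1} (x_i(v) x_{i+1}(w) − x_{i+1}(v) x_i(w))`. -/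
def Jform {R : Type*} [CommRing R] {n : ℕ} (v w : Fin n → R) : R :=
  ∑ i : Fin n, if h : (i : ℕ) + 1 < n then
      xcoord i v * xcoord ⟨(i : ℕ) + 1, h⟩ w - xcoord ⟨(i : ℕ) + 1, h⟩ v * xcoord i w
    else 0

/-- `γ(v)`: the gcd of the coordinates. -/
def gam {n : ℕ} (v : Fin n → ℤ) : ℤ := Finset.univ.gcd v

open Classical in
/-- `α(v)`: the number of coordinates `i` with `k_i / γ(v)` odd. -/
noncomputable def alph {n : ℕ} (v : Fin n → ℤ) : ℕ :=
  (Finset.univ.filter fun i => Odd (v i / gam v)).card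

/-- `δ(v) = |2 α(v) − n − 1|`. -/
noncomputable def delt {n : ℕ} (v : Fin n → ℤ) : ℤ := |2 * (alph v : ℤ) - (n : ℤ) - 1|

/-- For odd `n`, the invariant `x(v) = k_1 − k_2 + ⋯ + k_n`. -/
def xalt {n : ℕ} (v : Fin n → ℤ) : ℤ := ∑ j : Fin n, (-1 : ℤ) ^ (j : ℕ) * v j


/-!
In the coordinates `x_m` (with `x_0 = x_{n+1} = 0`) the form is the chain form
`J = Σ_m x_m ∧ x_{m+1}`, summation by parts gives `J(v, w) = Σ_m x_m(w) (x_{m-1}(v) - x_{m+1}(v))`,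
and `k_m = x_m + x_{m-1}`. The vector `u_p = e_p + e_{p+1}` has `x(u_p) = e_p`, so
`J(v, u_p) = k_p - k_{p+1}`. Hence `S_i v = v + J(v, u) u` with `u = u_{i-1}` is a symplectic
transvection, which preserves every alternating form, and a vector in the kernel has all
consecutive coordinates equal. Conversely the constant vector has `x`-sequence `c, 0, c, 0, …`,
which for odd `n` ends with `x_n = c`, `x_{n+1} = 0`; so `x_{m-1} = x_{m+1}` for `1 ≤ m ≤ n`.
-/

open Finset

lemma sum_range_shift_of_eq_zero {M : Type*} [AddCommMonoid M] (f : ℕ → M) (n : ℕ)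
    (h0 : f 0 = 0) (hn : f n = 0) : ∑ m ∈ range n, f (m + 1) = ∑ m ∈ range n, f m := by
  have h := (sum_range_succ' f n).symm.trans (sum_range_succ f n)
  rwa [h0, hn, add_zero, add_zero] at h

lemma eq_const_of_forall_succ {α : Type*} {n : ℕ} (v : Fin n → α)
    (h : ∀ p (hp : p + 1 < n), v ⟨p, by omega⟩ = v ⟨p + 1, hp⟩) (i : Fin n) :
    v = fun _ => v i := by
  have key : ∀ j (hj : j < n), v ⟨j, hj⟩ = v ⟨0, i.pos⟩ := by
    intro j hj
    induction j with
    | zero => rfl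
    | succ j ih => exact (h j hj).symm.trans (ih (by omega))
  funext j
  rw [key j j.isLt, key i i.isLt]

lemma LinearMap.BilinForm.IsAlt.apply_add_smul_apply_add_smul {R M : Type*} [CommRing R]
    [AddCommGroup M] [Module R M] {B : LinearMap.BilinForm R M} (hB : B.IsAlt) (u v w : M) :
    B (v + B v u • u) (w + B w u • u) = B v w := by
  simp only [map_add, map_smul, LinearMap.add_apply, LinearMap.smul_apply, smul_eq_mul,
    hB.self_eq_zero, ← hB.neg_eq u v, ← hB.neg_eq u w]
  ring

section Jform

variable {R : Type*} [CommRing R] {n : ℕ}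

/-- `xseq v m` is the paper's `x_m(v)` with 1-based `m`, i.e. `xcoord (m - 1) v` for
`1 ≤ m ≤ n`, extended by zero to all other `m`. -/
def xseq (v : Fin n → R) (m : ℕ) : R :=
  ∑ j : Fin n, if (j : ℕ) < m ∧ m ≤ n then (-1) ^ (m - 1 - j) * v j else 0

@[simp]
lemma xseq_zero (v : Fin n → R) : xseq v 0 = 0 := by
  simp [xseq]

lemma xseq_of_lt (v : Fin n → R) {m : ℕ} (hm : n < m) : xseq v m = 0 :=
  sum_eq_zero fun _ _ => if_neg (by omega)

lemma xseq_succ (v : Fin n → R) (i : Fin n) : xseq v (i + 1) = xcoord i v :=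
  sum_congr rfl fun j _ => by
    simp only [Fin.le_def, Nat.lt_succ_iff, Nat.add_sub_cancel, Nat.succ_le_of_lt i.isLt, and_true]

lemma xseq_succ_add_xseq (v : Fin n → R) (a : Fin n) : xseq v (a + 1) + xseq v a = v a := by
  rw [xseq, xseq, ← sum_add_distrib, ← Fintype.sum_ite_eq' a v]
  refine sum_congr rfl fun j _ => ?_
  have ha := a.isLt
  rcases lt_trichotomy (j : ℕ) a with h | h | h
  · have hpow : (a : ℕ) + 1 - 1 - j = (a - 1 - j) + 1 := by omega
    rw [if_pos ⟨by omega, by omega⟩, if_pos ⟨h, ha.le⟩, if_neg (Fin.ne_of_lt h), hpow, pow_succ]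
    ring
  · simp [Fin.ext h, ha]
  · rw [if_neg (by omega), if_neg (by omega), if_neg (Fin.ne_of_gt h), add_zero]

lemma xseq_eq_of_succ_add {v : Fin n → R} (Y : ℕ → R) (h0 : Y 0 = 0)
    (hY : ∀ a : Fin n, Y (a + 1) + Y a = v a) : ∀ m ≤ n, xseq v m = Y m
  | 0, _ => by rw [xseq_zero, h0]
  | m + 1, hm => by
    have key := (xseq_succ_add_xseq v ⟨m, hm⟩).trans (hY ⟨m, hm⟩).symm
    rw [xseq_eq_of_succ_add Y h0 hY m (by omega)] at key
    exact add_right_cancel key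

lemma Jform_eq_sum_xseq (v w : Fin n → R) :
    Jform v w =
      ∑ m ∈ range n, (xseq v (m + 1) * xseq w (m + 2) - xseq v (m + 2) * xseq w (m + 1)) := by
  rw [Jform, ← Fin.sum_univ_eq_sum_range]
  refine sum_congr rfl fun i _ => ?_
  split_ifs with h
  · rw [xseq_succ, xseq_succ, ← xseq_succ v ⟨i + 1, h⟩, ← xseq_succ w ⟨i + 1, h⟩]
  · rw [xseq_of_lt v (m := i + 1 + 1) (by omega), xseq_of_lt w (m := i + 1 + 1) (by omega)]
    ring

lemma Jform_eq_sum_mul_sub (v w : Fin n → R) :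
    Jform v w = ∑ m ∈ range n, xseq w (m + 1) * (xseq v m - xseq v (m + 2)) := by
  have hshift := sum_range_shift_of_eq_zero (fun m => xseq v m * xseq w (m + 1)) n
    (by simp) (by simp [xseq_of_lt w (Nat.lt_succ_self n)])
  simp only [Jform_eq_sum_xseq, sum_sub_distrib, mul_sub, hshift]
  congr 1 <;> exact sum_congr rfl fun m _ => mul_comm _ _

def pairVec (n p : ℕ) : Fin n → R := fun j => if (j : ℕ) = p ∨ (j : ℕ) = p + 1 then 1 else 0

lemma xseq_pairVec (p : ℕ) {m : ℕ} (hm : m ≤ n) :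
    xseq (pairVec n p : Fin n → R) m = if m = p + 1 then 1 else 0 := by
  refine xseq_eq_of_succ_add (fun m => if m = p + 1 then 1 else 0) (by simp) (fun a => ?_) m hm
  dsimp only [pairVec]
  split_ifs <;> simp_all

lemma Jform_pairVec (v : Fin n → R) {p : ℕ} (hp : p + 1 < n) :
    Jform v (pairVec n p) = v ⟨p, by omega⟩ - v ⟨p + 1, hp⟩ := by
  rw [Jform_eq_sum_mul_sub, ← xseq_succ_add_xseq v ⟨p, by omega⟩,
    ← xseq_succ_add_xseq v ⟨p + 1, hp⟩, sum_eq_single p]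
  · rw [xseq_pairVec p (by omega), if_pos rfl]
    ring
  · intro m hm hmp
    rw [xseq_pairVec p (mem_range.mp hm), if_neg (by omega), zero_mul]
  · exact fun h => absurd (mem_range.mpr (by omega)) h

lemma xseq_const (c : R) (m : ℕ) :
    xseq (fun _ : Fin n => c) m = if Odd m ∧ m ≤ n then c else 0 := by
  rcases le_or_gt m n with hm | hm
  · refine xseq_eq_of_succ_add (fun m => if Odd m ∧ m ≤ n then c else 0) (by simp)
      (fun a => ?_) m hm
    have ha := a.isLt
    rcases Nat.even_or_odd (a : ℕ) with h | h
    · simp [h.add_one, Nat.not_odd_iff_even.mpr h, Nat.succ_le_of_lt ha]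
    · simp [h, ha.le, Nat.not_odd_iff_even.mpr h.add_one]
  · rw [xseq_of_lt _ hm, if_neg (by omega)]

lemma Jform_const_left (hn : Odd n) (c : R) (w : Fin n → R) : Jform (fun _ => c) w = 0 := by
  rw [Jform_eq_sum_mul_sub]
  refine sum_eq_zero fun m hm => ?_
  have hm := mem_range.mp hm
  rw [xseq_const, xseq_const]
  simp only [Nat.odd_iff] at hn ⊢
  split_ifs <;> first | omega | simp

lemma xcoord_add (i : Fin n) (v w : Fin n → R) : xcoord i (v + w) = xcoord i v + xcoord i w := by
  simp only [xcoord, ← sum_add_distrib, Pi.add_apply]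
  exact sum_congr rfl fun j _ => by split_ifs <;> ring

lemma xcoord_smul (i : Fin n) (c : R) (v : Fin n → R) : xcoord i (c • v) = c * xcoord i v := by
  simp only [xcoord, mul_sum, Pi.smul_apply, smul_eq_mul]
  exact sum_congr rfl fun j _ => by split_ifs <;> ring

variable (R n) in
def Jbilin : LinearMap.BilinForm R (Fin n → R) := by
  refine LinearMap.mk₂ R Jform ?_ ?_ ?_ ?_ <;> intros <;>
    simp only [Jform, xcoord_add, xcoord_smul, ← sum_add_distrib, smul_eq_mul, mul_sum] <;>
    exact sum_congr rfl fun i _ => by split_ifs <;> ring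

lemma Jbilin_isAlt : (Jbilin R n).IsAlt := fun v => by
  change Jform v v = 0
  exact sum_eq_zero fun i _ => by split_ifs <;> ring

end Jform

lemma Sgen_apply_of_ne_zero {n : ℕ} (i : Fin n) (hi : (i : ℕ) ≠ 0) (v : Fin n → ℤ) :
    Sgen n i v = v + Jform v (pairVec n (i - 1)) • pairVec n (i - 1) := by
  have hi' : (i : ℕ) - 1 + 1 < n := by omega
  have hpred : ((ipred i : Fin n) : ℕ) = i - 1 := rfl
  rw [Jform_pairVec v hi', show (⟨(i : ℕ) - 1 + 1, hi'⟩ : Fin n) = i from Fin.ext (by simp; omega),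
    show (⟨(i : ℕ) - 1, _⟩ : Fin n) = ipred i from rfl]
  funext j
  change SFun n i v j = _
  simp only [SFun, if_neg hi, Pi.add_apply, Pi.smul_apply, pairVec, smul_eq_mul]
  split_ifs <;> subst_vars <;> first | ring1 | omega

theorem Jform_invariant_and_kernel_odd_general (n : ℕ) (hodd : Odd n) :
    (∀ i : Fin n, (i : ℕ) ≠ 0 → ∀ v w : Fin n → ℤ,
        Jform (Sgen n i v) (Sgen n i w) = Jform v w) ∧
    {v : Fin n → ℤ | ∀ w, Jform v w = 0} =
      Set.range (fun c : ℤ => (fun _ : Fin n => c)) := by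
  refine ⟨fun i hi v w => ?_, Set.ext fun v => ⟨fun hv => ?_, ?_⟩⟩
  · rw [Sgen_apply_of_ne_zero i hi, Sgen_apply_of_ne_zero i hi]
    exact Jbilin_isAlt.apply_add_smul_apply_add_smul (pairVec n (i - 1)) v w
  · refine ⟨v ⟨0, hodd.pos⟩, (eq_const_of_forall_succ v (fun p hp => ?_) _).symm⟩
    exact sub_eq_zero.mp ((Jform_pairVec v hp).symm.trans (hv _))
  · rintro ⟨c, rfl⟩ w
    exact Jform_const_left hodd c w

/-- For odd `n ≥ 3`, the form `J` is invariant under the generators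
`S_2, …, S_n` of `𝒢_n`, and its kernel is the rank-one subgroup `ℤ·(1,1,…,1)`. -/
theorem Jform_invariant_and_kernel_odd (n : ℕ) (hn : 3 ≤ n) (hodd : Odd n) :
    (∀ i : Fin n, (i : ℕ) ≠ 0 → ∀ v w : Fin n → ℤ,
        Jform (Sgen n i v) (Sgen n i w) = Jform v w) ∧
    {v : Fin n → ℤ | ∀ w, Jform v w = 0} =
      Set.range (fun c : ℤ => (fun _ : Fin n => c)) :=
  Jform_invariant_and_kernel_odd_general n hodd
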